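/- arXiv:math/0101150 — 6 statements merged into one kernel-verified Lean document; each statement's English description precedes it below -/
import Mathlib

section
/- Let U ⊆ ℝⁿ be an open set and let f, g : U → ℝ be smooth functions such that the gradient of f is nonzero at every point of U and, at every point p ∈ U, the gradients of f and g are linearly dependent (collinear). Then for each point p ∈ U there exist an open neighborhood O ⊆ U of p and a smooth function ρ : ℝ → ℝ of one variable such that g = ρ∘f on O. -/
/-!
With `ℓ = Df(p)` and `ℓ e = 1`, the map `y ↦ y + (f y - ℓ y) • e` has derivative
`id + (Df(y) - ℓ) ⊗ e`, invertible wherever `Df(y) e ≠ 0`. By the inverse function theorem it is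
a smooth chart `Φ` near `p` in which `f` becomes the linear form `ℓ`. In this chart `D(g ∘ Φ⁻¹)`
is a multiple of `ℓ`, so by the mean value theorem `g ∘ Φ⁻¹` is constant on the slices
`ℓ = const` of a ball. Near `p`, `g` is therefore `g ∘ Φ⁻¹` restricted to the line through `Φ p`
along `e`, read as a function of the value of `f`; precomposing with a bump-function cut-off makes
it smooth on all of `ℝ`.
-/

open Set Metric Topology

namespace ContinuousLinearMap

variable {𝕜 E : Type*} [NontriviallyNormedField 𝕜] [NormedAddCommGroup E] [NormedSpace 𝕜 E]

theorem isInvertible_id_add_smulRight (a : E →L[𝕜] 𝕜) (e : E) (h : 1 + a e ≠ 0) :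
    (.id 𝕜 E + a.smulRight e : E →L[𝕜] E).IsInvertible := by
  refine IsInvertible.of_inverse (g := .id 𝕜 E - (1 + a e)⁻¹ • a.smulRight e) ?_ ?_ <;>
    ext v <;>
    simp only [coe_comp, Function.comp_apply, add_apply, sub_apply, coe_id', id_eq, smul_apply,
      smulRight_apply, map_sub, map_add, map_smul, smul_smul] <;>
    linear_combination (norm := module) (-a v) • inv_mul_cancel₀ h • e

theorem exists_apply_eq_one {ℓ : E →L[𝕜] 𝕜} (h : ℓ ≠ 0) : ∃ e, ℓ e = 1 := by
  obtain ⟨v, hv⟩ := DFunLike.ne_iff.mp h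
  exact ⟨(ℓ v)⁻¹ • v, by simp [inv_mul_cancel₀ (by simpa using hv)]⟩

end ContinuousLinearMap

theorem ContDiffOn.exists_openPartialHomeomorph {𝕜 E F : Type*} [RCLike 𝕜]
    [NormedAddCommGroup E] [NormedSpace 𝕜 E] [CompleteSpace E]
    [NormedAddCommGroup F] [NormedSpace 𝕜 F] {f : E → F} {s : Set E} {n : WithTop ℕ∞} {a : E}
    (hs : IsOpen s) (hf : ContDiffOn 𝕜 n f s) (hn : n ≠ 0)
    (hf' : ∀ x ∈ s, (fderiv 𝕜 f x).IsInvertible) (ha : a ∈ s) :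
    ∃ Φ : OpenPartialHomeomorph E F,
      ⇑Φ = f ∧ a ∈ Φ.source ∧ Φ.source ⊆ s ∧ ContDiffOn 𝕜 n Φ.symm Φ.target := by
  have hfC : ∀ x ∈ s, ContDiffAt 𝕜 n f x := fun x hx => hf.contDiffAt (hs.mem_nhds hx)
  have hfD : ∀ x ∈ s, HasFDerivAt f (fderiv 𝕜 f x) x := fun x hx =>
    ((hfC x hx).differentiableAt hn).hasFDerivAt
  obtain ⟨A, hA⟩ := hf' a ha
  let Φ := ((hfC a ha).toOpenPartialHomeomorph f (hA ▸ hfD a ha) hn).restrOpen s hs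
  refine ⟨Φ, rfl, ⟨(hfC a ha).mem_toOpenPartialHomeomorph_source _ hn, ha⟩,
    inter_subset_right, fun y hy => ?_⟩
  have hx : Φ.symm y ∈ s := (Φ.map_target hy).2
  obtain ⟨B, hB⟩ := hf' _ hx
  exact (Φ.contDiffAt_symm hy (hB ▸ hfD _ hx) (hfC _ hx)).contDiffWithinAt

section Straightening

variable {𝕜 E : Type*} [NontriviallyNormedField 𝕜] [NormedAddCommGroup E] [NormedSpace 𝕜 E]
  {f : E → 𝕜} {ℓ : E →L[𝕜] 𝕜} {e : E}

def straighten (f : E → 𝕜) (ℓ : E →L[𝕜] 𝕜) (e : E) (y : E) : E :=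
  y + (f y - ℓ y) • e

theorem apply_straighten (he : ℓ e = 1) (y : E) : ℓ (straighten f ℓ e y) = f y := by
  simp [straighten, he]

theorem HasFDerivAt.straighten {f' : E →L[𝕜] 𝕜} {x : E} (hf : HasFDerivAt f f' x) :
    HasFDerivAt (straighten f ℓ e) (.id 𝕜 E + (f' - ℓ).smulRight e) x :=
  (hasFDerivAt_id x).add ((hf.sub ℓ.hasFDerivAt).smul_const e)

theorem ContDiffOn.straighten {n : WithTop ℕ∞} {s : Set E} (hf : ContDiffOn 𝕜 n f s) :
    ContDiffOn 𝕜 n (straighten f ℓ e) s :=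
  contDiffOn_id.add ((hf.sub ℓ.contDiff.contDiffOn).smul contDiffOn_const)

theorem isInvertible_fderiv_straighten {x : E} (hf : DifferentiableAt 𝕜 f x) (he : ℓ e = 1)
    (hfe : fderiv 𝕜 f x e ≠ 0) : (fderiv 𝕜 (straighten f ℓ e) x).IsInvertible := by
  rw [hf.hasFDerivAt.straighten.fderiv]
  exact ContinuousLinearMap.isInvertible_id_add_smulRight _ _ (by simpa [he] using hfe)

end Straightening

theorem ContDiffOn.exists_openPartialHomeomorph_eqOn_fderiv_comp {𝕜 E : Type*} [RCLike 𝕜]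
    [NormedAddCommGroup E] [NormedSpace 𝕜 E] [CompleteSpace E] {f : E → 𝕜} {U : Set E}
    {n : WithTop ℕ∞} {p : E} (hU : IsOpen U) (hf : ContDiffOn 𝕜 n f U) (hn : 1 ≤ n) (hp : p ∈ U)
    (hfp : fderiv 𝕜 f p ≠ 0) :
    ∃ Φ : OpenPartialHomeomorph E E, p ∈ Φ.source ∧ Φ.source ⊆ U ∧
      ContDiffOn 𝕜 n Φ.symm Φ.target ∧ EqOn (fderiv 𝕜 f p ∘ Φ) f Φ.source := by
  have hn₀ : n ≠ 0 := ENat.one_le_iff_ne_zero_withTop.mp hn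
  obtain ⟨e, he⟩ := (fderiv 𝕜 f p).exists_apply_eq_one hfp
  let W := U ∩ (fun x => fderiv 𝕜 f x e) ⁻¹' {0}ᶜ
  have hW : IsOpen W := ((hf.continuousOn_fderiv_of_isOpen hU hn).clm_apply
    continuousOn_const).isOpen_inter_preimage hU isOpen_compl_singleton
  have hfW : ∀ x ∈ W, DifferentiableAt 𝕜 f x := fun x hx =>
    (hf.differentiableOn hn₀).differentiableAt (hU.mem_nhds hx.1)
  obtain ⟨Φ, hΦ, hpΦ, hΦW, hsymm⟩ :=
    (hf.mono inter_subset_left).straighten.exists_openPartialHomeomorph hW hn₀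
      (fun x hx => isInvertible_fderiv_straighten (hfW x hx) he hx.2)
      (show p ∈ W by simp [W, hp, he])
  refine ⟨_, hpΦ, hΦW.trans inter_subset_left, hsymm, fun x _ => ?_⟩
  simp only [Function.comp_apply, hΦ, apply_straighten he]

theorem OpenPartialHomeomorph.exists_hasFDerivAt_comp_symm_eq_smul {𝕜 E : Type*}
    [NontriviallyNormedField 𝕜] [NormedAddCommGroup E] [NormedSpace 𝕜 E]
    {Φ : OpenPartialHomeomorph E E} {f g : E → 𝕜} {ℓ : E →L[𝕜] 𝕜} {y : E}
    (hfΦ : EqOn (ℓ ∘ Φ) f Φ.source) (hf : DifferentiableOn 𝕜 f Φ.source)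
    (hg : DifferentiableOn 𝕜 g Φ.source)
    (hdep : ∀ x ∈ Φ.source, ∃ κ : 𝕜, fderiv 𝕜 g x = κ • fderiv 𝕜 f x)
    (hy : y ∈ Φ.target) (hΦy : DifferentiableAt 𝕜 Φ.symm y) :
    ∃ κ : 𝕜, HasFDerivAt (g ∘ Φ.symm) (κ • ℓ) y := by
  have hx := Φ.map_target hy
  have hdiff : ∀ h : E → 𝕜, DifferentiableOn 𝕜 h Φ.source → DifferentiableAt 𝕜 h (Φ.symm y) :=
    fun h hh => hh.differentiableAt (Φ.open_source.mem_nhds hx)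
  have hfΦ_symm : f ∘ Φ.symm =ᶠ[𝓝 y] ℓ := by
    filter_upwards [Φ.open_target.mem_nhds hy] with y' hy'
    simp [← hfΦ (Φ.map_target hy'), Φ.right_inv hy']
  have hfx : fderiv 𝕜 f (Φ.symm y) ∘L fderiv 𝕜 Φ.symm y = ℓ := by
    rw [← fderiv_comp y (hdiff f hf) hΦy, hfΦ_symm.fderiv_eq, ℓ.fderiv]
  obtain ⟨κ, hκ⟩ := hdep _ hx
  refine ⟨κ, ?_⟩
  have := (hdiff g hg).hasFDerivAt.comp y hΦy.hasFDerivAt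
  rwa [hκ, ContinuousLinearMap.smul_comp, hfx] at this

theorem Convex.apply_eq_of_hasFDerivAt_smul {E : Type*} [NormedAddCommGroup E]
    [NormedSpace ℝ E] {h : E → ℝ} {ℓ : E →L[ℝ] ℝ} {B : Set E} (hB : Convex ℝ B)
    (hh : ∀ y ∈ B, ∃ κ : ℝ, HasFDerivAt h (κ • ℓ) y) {y₁ y₂ : E} (hy₁ : y₁ ∈ B) (hy₂ : y₂ ∈ B)
    (hℓ : ℓ y₁ = ℓ y₂) : h y₁ = h y₂ := by
  have hh' : ∀ y ∈ B, HasFDerivWithinAt h (fderiv ℝ h y) B y := fun y hy => by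
    obtain ⟨κ, hκ⟩ := hh y hy
    exact hκ.differentiableAt.hasFDerivAt.hasFDerivWithinAt
  obtain ⟨z, hz, hmvt⟩ := domain_mvt hh' hB hy₁ hy₂
  obtain ⟨κ, hκ⟩ := hh z (hB.segment_subset hy₁ hy₂ hz)
  rw [hκ.fderiv, smul_apply, map_sub, hℓ, sub_self, smul_zero, sub_eq_zero] at hmvt
  exact hmvt.symm

theorem exists_contDiff_mem_ball_eqOn_id {E : Type*} [NormedAddCommGroup E] [NormedSpace ℝ E]
    [HasContDiffBump E] (a : E) {δ : ℝ} (hδ : 0 < δ) (n : ℕ∞) :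
    ∃ χ : E → E, ContDiff ℝ n χ ∧ (∀ x, χ x ∈ ball a δ) ∧ EqOn χ id (closedBall a (δ / 2)) := by
  let φ : ContDiffBump a := ⟨δ / 2, δ, half_pos hδ, half_lt_self hδ⟩
  refine ⟨fun x => a + φ x • (x - a), contDiff_const.add (φ.contDiff.smul
    (contDiff_id.sub contDiff_const)), fun x => ?_, fun x hx => ?_⟩
  · rw [mem_ball, dist_eq_norm, add_sub_cancel_left, norm_smul, Real.norm_of_nonneg φ.nonneg]
    by_cases hx : x ∈ ball a δ
    · calc φ x * ‖x - a‖ ≤ 1 * ‖x - a‖ := by gcongr; exact φ.le_one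
        _ < δ := by simpa [dist_eq_norm] using hx
    · rw [← φ.support_eq, Function.notMem_support] at hx
      simpa [hx] using hδ
  · simp [φ.one_of_mem_closedBall hx]

theorem ContDiffOn.exists_contDiff_eqOn_ball {E F : Type*} [NormedAddCommGroup E]
    [NormedSpace ℝ E] [HasContDiffBump E] [NormedAddCommGroup F] [NormedSpace ℝ F] {ρ : E → F}
    {a : E} {δ : ℝ} {n : ℕ∞} (hρ : ContDiffOn ℝ n ρ (ball a δ)) (hδ : 0 < δ) :
    ∃ ρ' : E → F, ContDiff ℝ n ρ' ∧ EqOn ρ' ρ (ball a (δ / 2)) := by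
  obtain ⟨χ, hχ, hχball, hχid⟩ := exists_contDiff_mem_ball_eqOn_id a hδ n
  exact ⟨ρ ∘ χ, hρ.comp_contDiff hχ hχball, fun x hx => by
    simp [hχid (ball_subset_closedBall hx)]⟩

theorem exists_contDiff_eqOn_comp_of_fderiv_eq_smul {E : Type*} [NormedAddCommGroup E]
    [NormedSpace ℝ E] [CompleteSpace E] {f g : E → ℝ} {U : Set E} {n : ℕ∞} {p : E}
    (hU : IsOpen U) (hf : ContDiffOn ℝ n f U) (hg : ContDiffOn ℝ n g U) (hn : 1 ≤ n)
    (hdep : ∀ x ∈ U, ∃ κ : ℝ, fderiv ℝ g x = κ • fderiv ℝ f x) (hp : p ∈ U)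
    (hfp : fderiv ℝ f p ≠ 0) :
    ∃ O ⊆ U, IsOpen O ∧ p ∈ O ∧ ∃ ρ : ℝ → ℝ, ContDiff ℝ n ρ ∧ EqOn g (ρ ∘ f) O := by
  have hn' : (1 : WithTop ℕ∞) ≤ n := by exact_mod_cast hn
  have hn₀ : (n : WithTop ℕ∞) ≠ 0 := ENat.one_le_iff_ne_zero_withTop.mp hn'
  obtain ⟨Φ, hpΦ, hΦU, hsymm, hfΦ⟩ :=
    hf.exists_openPartialHomeomorph_eqOn_fderiv_comp hU hn' hp hfp
  set ℓ := fderiv ℝ f p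
  obtain ⟨e, he⟩ := ℓ.exists_apply_eq_one hfp
  obtain ⟨r, hr, hrΦ⟩ := Metric.isOpen_iff.mp Φ.open_target (Φ p) (Φ.map_source hpΦ)
  have hconst : ∀ y₁ ∈ ball (Φ p) r, ∀ y₂ ∈ ball (Φ p) r, ℓ y₁ = ℓ y₂ →
      g (Φ.symm y₁) = g (Φ.symm y₂) := fun y₁ hy₁ y₂ hy₂ =>
    (convex_ball _ _).apply_eq_of_hasFDerivAt_smul (h := g ∘ Φ.symm) (fun y hy =>
      Φ.exists_hasFDerivAt_comp_symm_eq_smul hfΦ ((hf.differentiableOn hn₀).mono hΦU)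
        ((hg.differentiableOn hn₀).mono hΦU) (fun x hx => hdep x (hΦU hx)) (hrΦ hy)
        ((hsymm.differentiableOn hn₀).differentiableAt (Φ.open_target.mem_nhds (hrΦ hy))))
      hy₁ hy₂
  let line : ℝ → E := fun s => Φ p + (s - f p) • e
  have hℓline : ∀ s, ℓ (line s) = s := fun s => by
    simp [line, he, show ℓ (Φ p) = f p from hfΦ hpΦ]
  have hline : Continuous line := by fun_prop
  obtain ⟨δ, hδ, hδr⟩ := Metric.isOpen_iff.mp (isOpen_ball.preimage hline) (f p)
    (show line (f p) ∈ ball (Φ p) r by simp [line, hr])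
  obtain ⟨ρ, hρ, hρeq⟩ := ContDiffOn.exists_contDiff_eqOn_ball (ρ := g ∘ Φ.symm ∘ line)
    (hg.comp (hsymm.comp (by fun_prop) fun s hs => hrΦ (hδr hs))
      fun s hs => hΦU (Φ.map_target (hrΦ (hδr hs)))) hδ
  have hO : IsOpen (Φ.source ∩ Φ ⁻¹' ball (Φ p) r ∩ f ⁻¹' ball (f p) (δ / 2)) :=
    (hf.continuousOn.mono fun x hx => hΦU hx.1).isOpen_inter_preimage
      (Φ.isOpen_inter_preimage isOpen_ball) isOpen_ball
  refine ⟨_, fun x hx => hΦU hx.1.1, hO, ⟨⟨hpΦ, mem_ball_self hr⟩, mem_ball_self (half_pos hδ)⟩,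
    ρ, hρ, fun x ⟨⟨hxΦ, hxr⟩, hxδ⟩ => ?_⟩
  have hxline : line (f x) ∈ ball (Φ p) r := hδr (ball_subset_ball (half_le_self hδ.le) hxδ)
  calc g x = g (Φ.symm (Φ x)) := by rw [Φ.left_inv hxΦ]
    _ = g (Φ.symm (line (f x))) := hconst _ hxr _ hxline (by rw [hℓline]; exact hfΦ hxΦ)
    _ = ρ (f x) := (hρeq hxδ).symm

/-- Lemma 3.1: If `grad f ≠ 0` on an open set `U` and `grad g` is
everywhere collinear to `grad f`, then locally `g = ρ ∘ f` for some smooth `ρ`. -/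
theorem local_functional_dependence (n : ℕ) (U : Set (EuclideanSpace ℝ (Fin n)))
    (hU : IsOpen U) (f g : EuclideanSpace ℝ (Fin n) → ℝ)
    (hf : ContDiffOn ℝ (⊤ : ℕ∞) f U) (hg : ContDiffOn ℝ (⊤ : ℕ∞) g U)
    (hf0 : ∀ p ∈ U, gradient f p ≠ 0)
    (hdep : ∀ p ∈ U, ∃ c : ℝ, gradient g p = c • gradient f p)
    (p : EuclideanSpace ℝ (Fin n)) (hp : p ∈ U) :
    ∃ O ⊆ U, IsOpen O ∧ p ∈ O ∧
      ∃ ρ : ℝ → ℝ, ContDiff ℝ (⊤ : ℕ∞) ρ ∧ ∀ x ∈ O, g x = ρ (f x) := by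
  have hfderiv (h : EuclideanSpace ℝ (Fin n) → ℝ) (x) :
      fderiv ℝ h x = InnerProductSpace.toDual ℝ _ (gradient h x) :=
    toDual_gradient.symm
  have hdep' : ∀ x ∈ U, ∃ κ : ℝ, fderiv ℝ g x = κ • fderiv ℝ f x := fun x hx => by
    obtain ⟨κ, hκ⟩ := hdep x hx
    exact ⟨κ, by rw [hfderiv, hfderiv, hκ, map_smul]⟩
  have hfp : fderiv ℝ f p ≠ 0 := by
    rw [hfderiv, Ne, LinearIsometryEquiv.map_eq_zero_iff]
    exact hf0 p hp
  exact exists_contDiff_eqOn_comp_of_fderiv_eq_smul hU hf hg le_top hdep' hp hfp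
end

section
/- Let Ω be an open subset of ℝⁿ × ℝ⁺ (ℝ⁺ the positive reals; coordinates x¹,…,xⁿ and v), let h, h̃ : ℝ → ℝ be smooth, and let W, W̃ : Ω → ℝ be smooth with ∂W/∂v ≠ 0 and ∂W̃/∂v ≠ 0 at every point of Ω. Suppose that at every point of Ω: h(W)/(∂W/∂v) = h̃(W̃)/(∂W̃/∂v) and, for each i ∈ {1,…,n}, (∂W/∂xⁱ)/(∂W/∂v) = (∂W̃/∂xⁱ)/(∂W̃/∂v). Then for each point q ∈ Ω there exist an open neighborhood O ⊆ Ω of q and a smooth function ρ : ℝ → ℝ with nowhere-vanishing derivative such that W̃ = ρ∘W on O and h̃(ρ(w)) = h(w)·ρ'(w) for all w in the image W(O). -/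
/-!
The second hypothesis says `dW̃ = λ dW` with `λ = W̃_v / W_v`, so `W̃` is constant along the level
sets of `W`. Straightening `W` by the local diffeomorphism `(x, v) ↦ (x, W(x, v))` turns `W̃` into
a function with vanishing `x`-derivative, i.e. `W̃ = ρ₀ ∘ W` near `q`. The chain rule then gives
`W̃_v = ρ₀'(W) W_v`, so `ρ₀' ≠ 0` and the first hypothesis becomes `h̃ ∘ ρ₀ = h · ρ₀'`. Since `ρ₀`
lives only near `W q`, the global `ρ` is obtained by integrating a bump-function interpolation
between `ρ₀'` and the constant `ρ₀'(W q)`, which keeps the derivative away from `0`.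
-/

open Set
open scoped ContDiff Topology

theorem ContinuousLinearMap.eq_smul_of_ratios_eq {n : ℕ} {A B : ((Fin n → ℝ) × ℝ) →L[ℝ] ℝ}
    (hA : A (0, 1) ≠ 0) (hB : B (0, 1) ≠ 0)
    (hAB : ∀ i : Fin n, A (Pi.single i 1, 0) / A (0, 1) = B (Pi.single i 1, 0) / B (0, 1)) :
    B = (B (0, 1) / A (0, 1)) • A := by
  apply ContinuousLinearMap.prod_ext
  · apply ContinuousLinearMap.coe_injective
    refine LinearMap.pi_ext' fun i => LinearMap.ext_ring ?_
    have hi := hAB i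
    field_simp at hi
    simp only [toLinearMap_comp, coe_inl, LinearMap.coe_comp, coe_coe, LinearMap.coe_inl,
      LinearMap.coe_single, Function.comp_apply, smul_comp, toLinearMap_smul,
      LinearMap.coe_smul, Pi.smul_apply, smul_eq_mul]
    field_simp
    linarith
  · ext
    simp [hA]

variable {E F G : Type*} [NormedAddCommGroup E] [NormedSpace ℝ E] [NormedAddCommGroup F]
  [NormedSpace ℝ F] [NormedAddCommGroup G] [NormedSpace ℝ G]

noncomputable def ContinuousLinearMap.fstProdEquiv (A : (E × ℝ) →L[ℝ] ℝ) (hA : A (0, 1) ≠ 0) :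
    (E × ℝ) ≃L[ℝ] (E × ℝ) :=
  (ContinuousLinearEquiv.refl ℝ E).skewProd (ContinuousLinearEquiv.unitsEquivAut ℝ (.mk0 _ hA))
    (A ∘L .inl ℝ E ℝ)

theorem ContinuousLinearMap.coe_fstProdEquiv (A : (E × ℝ) →L[ℝ] ℝ) (hA : A (0, 1) ≠ 0) :
    (A.fstProdEquiv hA : (E × ℝ) →L[ℝ] (E × ℝ)) = (fst ℝ E ℝ).prod A := by
  refine ContinuousLinearMap.ext fun ⟨x, v⟩ => Prod.ext ?_ ?_
  · rfl
  · have : ((x, v) : E × ℝ) = (x, 0) + v • (0, 1) := by simp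
    conv_rhs => rw [this, map_add, map_smul]
    simp [fstProdEquiv, add_comm]

theorem exists_openPartialHomeomorph_fst_prod [CompleteSpace E] {Ω : Set (E × ℝ)}
    (hΩ : IsOpen Ω) {W : E × ℝ → ℝ} (hW : ContDiffOn ℝ ∞ W Ω)
    (hWv : ∀ p ∈ Ω, fderiv ℝ W p (0, 1) ≠ 0) {q : E × ℝ} (hq : q ∈ Ω) :
    ∃ P : OpenPartialHomeomorph (E × ℝ) (E × ℝ), ⇑P = (fun p => (p.1, W p)) ∧
      q ∈ P.source ∧ P.source ⊆ Ω ∧ ∀ y ∈ P.target, ContDiffAt ℝ ∞ P.symm y := by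
  have hsmooth : ∀ p ∈ Ω, ContDiffAt ℝ ∞ (fun p => (p.1, W p)) p := fun p hp =>
    contDiffAt_fst.prodMk (hW.contDiffAt (hΩ.mem_nhds hp))
  have hderiv : ∀ p, ∀ hp : p ∈ Ω, HasFDerivAt (fun p => (p.1, W p))
      ((fderiv ℝ W p).fstProdEquiv (hWv p hp) : (E × ℝ) →L[ℝ] (E × ℝ)) p := fun p hp => by
    rw [ContinuousLinearMap.coe_fstProdEquiv]
    exact hasFDerivAt_fst.prodMk
      ((hsmooth p hp).snd.differentiableAt (by simp)).hasFDerivAt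
  let P := ((hsmooth q hq).toOpenPartialHomeomorph _ (hderiv q hq) (by simp)).restrOpen Ω hΩ
  refine ⟨P, rfl, ⟨?_, hq⟩, inter_subset_right, fun y hy => ?_⟩
  · exact (hsmooth q hq).mem_toOpenPartialHomeomorph_source (hderiv q hq) (by simp)
  · have hyΩ : P.symm y ∈ Ω := (P.map_target hy).2
    exact P.contDiffAt_symm hy (hderiv _ hyΩ) (hsmooth _ hyΩ)

theorem apply_eq_of_hasFDerivAt_comp_inl_eq_zero {g : E × F → G} {s : Set E} {t : Set F}
    (hs : Convex ℝ s)
    (hg : ∀ y ∈ s ×ˢ t, ∃ L : (E × F) →L[ℝ] G, HasFDerivAt g L y ∧ L ∘L .inl ℝ E F = 0)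
    {x x' : E} (hx : x ∈ s) (hx' : x' ∈ s) {w : F} (hw : w ∈ t) : g (x, w) = g (x', w) := by
  have hderiv : ∀ z ∈ s, HasFDerivWithinAt (fun z => g (z, w)) (0 : E →L[ℝ] G) s z := by
    intro z hz
    obtain ⟨L, hL, hLinl⟩ := hg (z, w) ⟨hz, hw⟩
    rw [← hLinl]
    exact (hL.comp z (hasFDerivAt_prodMk_left z w)).hasFDerivWithinAt
  have := hs.norm_image_sub_le_of_norm_hasFDerivWithin_le hderiv (C := 0) (by simp) hx' hx
  simpa [sub_eq_zero] using this

theorem exists_eventuallyEq_comp_of_fderiv_eq_smul [CompleteSpace E] {Ω : Set (E × ℝ)}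
    (hΩ : IsOpen Ω) {W W' : E × ℝ → ℝ} (hW : ContDiffOn ℝ ∞ W Ω) (hW' : ContDiffOn ℝ ∞ W' Ω)
    (hWv : ∀ p ∈ Ω, fderiv ℝ W p (0, 1) ≠ 0)
    (hW'W : ∀ p ∈ Ω, ∃ c : ℝ, fderiv ℝ W' p = c • fderiv ℝ W p) {q : E × ℝ} (hq : q ∈ Ω) :
    ∃ ρ₀ : ℝ → ℝ, ∃ t : Set ℝ, IsOpen t ∧ W q ∈ t ∧ ContDiffOn ℝ ∞ ρ₀ t ∧
      W' =ᶠ[𝓝 q] ρ₀ ∘ W := by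
  obtain ⟨P, hPW, hqP, hPΩ, hPsymm⟩ := exists_openPartialHomeomorph_fst_prod hΩ hW hWv hq
  have hsymmΩ : ∀ y ∈ P.target, P.symm y ∈ Ω := fun y hy => hPΩ (P.map_target hy)
  have hW'smooth : ∀ y ∈ P.target, ContDiffAt ℝ ∞ (W' ∘ P.symm) y := fun y hy =>
    (hW'.contDiffAt (hΩ.mem_nhds (hsymmΩ y hy))).comp y (hPsymm y hy)
  have hW'deriv : ∀ y ∈ P.target, ∃ L : (E × ℝ) →L[ℝ] ℝ,
      HasFDerivAt (W' ∘ P.symm) L y ∧ L ∘L .inl ℝ E ℝ = 0 := by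
    intro y hy
    obtain ⟨c, hc⟩ := hW'W _ (hsymmΩ y hy)
    have hWsymm : W ∘ P.symm =ᶠ[𝓝 y] Prod.snd := by
      filter_upwards [P.open_target.mem_nhds hy] with z hz
      simpa [hPW] using congrArg Prod.snd (P.right_inv hz)
    have hdiff : ∀ {f : E × ℝ → ℝ}, ContDiffOn ℝ ∞ f Ω → HasFDerivAt (f ∘ P.symm)
        ((fderiv ℝ f (P.symm y)) ∘L fderiv ℝ P.symm y) y := fun hf =>
      ((hf.contDiffAt (hΩ.mem_nhds (hsymmΩ y hy))).differentiableAt (by simp)).hasFDerivAt.comp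
        y ((hPsymm y hy).differentiableAt (by simp)).hasFDerivAt
    have hWsnd : fderiv ℝ W (P.symm y) ∘L fderiv ℝ P.symm y = .snd ℝ E ℝ :=
      (hdiff hW).unique (hasFDerivAt_snd.congr_of_eventuallyEq hWsymm)
    refine ⟨_, hdiff hW', ?_⟩
    rw [hc, ContinuousLinearMap.smul_comp, hWsnd]
    ext
    simp
  have hPq : P q = (q.1, W q) := by rw [hPW]
  obtain ⟨ε, hε, hεP⟩ := Metric.isOpen_iff.1 P.open_target _ (P.map_source hqP)
  rw [hPq, ← ball_prod_same] at hεP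
  refine ⟨fun w => W' (P.symm (q.1, w)), Metric.ball (W q) ε, Metric.isOpen_ball,
    Metric.mem_ball_self hε, fun w hw => ?_, ?_⟩
  · exact ((hW'smooth _ (hεP (mk_mem_prod (Metric.mem_ball_self hε) hw))).comp w
      (contDiffAt_const.prodMk contDiffAt_id)).contDiffWithinAt
  · have hball : Metric.ball q.1 ε ×ˢ Metric.ball (W q) ε ∈ 𝓝 (P q) := by
      rw [hPq]
      exact prod_mem_nhds (Metric.ball_mem_nhds _ hε) (Metric.ball_mem_nhds _ hε)
    filter_upwards [P.open_source.mem_nhds hqP, (P.continuousAt hqP).preimage_mem_nhds hball]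
      with p hpP hpball
    have hPp : P p = (p.1, W p) := by rw [hPW]
    rw [mem_preimage, hPp] at hpball
    calc W' p = (W' ∘ P.symm) (p.1, W p) := by rw [Function.comp_apply, ← hPp, P.left_inv hpP]
      _ = (W' ∘ P.symm) (q.1, W p) :=
        apply_eq_of_hasFDerivAt_comp_inl_eq_zero (convex_ball _ _)
          (fun y hy => hW'deriv y (hεP hy)) hpball.1 (Metric.mem_ball_self hε) hpball.2

theorem HasDerivAt.fderiv_apply_of_eventuallyEq_comp {f g : E → ℝ} {ρ : ℝ → ℝ} {ρ' : ℝ} {p : E}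
    (hρ : HasDerivAt ρ ρ' (f p)) (hf : DifferentiableAt ℝ f p) (hg : g =ᶠ[𝓝 p] ρ ∘ f) (v : E) :
    fderiv ℝ g p v = ρ' * fderiv ℝ f p v := by
  rw [hg.fderiv_eq, (hρ.comp_hasFDerivAt p hf.hasFDerivAt).fderiv]
  simp

theorem exists_contDiff_ne_zero_eventuallyEq {n : ℕ∞} {η : ℝ → ℝ} {s : Set ℝ} {w₀ : ℝ}
    (hs : IsOpen s) (hw₀ : w₀ ∈ s) (hη : ContDiffOn ℝ n η s) (hη₀ : η w₀ ≠ 0) :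
    ∃ D : ℝ → ℝ, ContDiff ℝ n D ∧ (∀ w, D w ≠ 0) ∧ D =ᶠ[𝓝 w₀] η := by
  set c := η w₀
  have hnear : ∀ᶠ w in 𝓝 w₀, w ∈ s ∧ η w ∈ Metric.ball c |c| :=
    (hs.eventually_mem hw₀).and ((hη.continuousOn.continuousAt (hs.mem_nhds hw₀)).eventually
      (Metric.ball_mem_nhds c (abs_pos.2 hη₀)))
  obtain ⟨δ, hδ, hδs⟩ := Metric.eventually_nhds_iff_ball.1 hnear
  let φ : ContDiffBump w₀ := ⟨δ / 4, δ / 2, by positivity, by linarith⟩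
  have hφδ : tsupport φ ⊆ Metric.ball w₀ δ := by
    rw [φ.tsupport_eq]
    exact Metric.closedBall_subset_ball (half_lt_self hδ)
  refine ⟨fun w => c + φ w * (η w - c), contDiff_iff_contDiffAt.2 fun w => ?_, fun w => ?_, ?_⟩
  · by_cases hw : w ∈ tsupport φ
    · have hηw := hη.contDiffAt (hs.mem_nhds (hδs w (hφδ hw)).1)
      exact contDiffAt_const.add (φ.contDiff.contDiffAt.mul (hηw.sub contDiffAt_const))
    · refine (contDiffAt_const (c := c)).congr_of_eventuallyEq ?_
      filter_upwards [notMem_tsupport_iff_eventuallyEq.1 hw] with z hz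
      simp [hz]
  · by_cases hw : φ w = 0
    · simpa [hw] using hη₀
    · have hηw : |η w - c| < |c| := (hδs w (hφδ (subset_tsupport _ hw))).2
      have : |φ w * (η w - c)| < |c| := by
        rw [abs_mul, abs_of_nonneg φ.nonneg]
        exact lt_of_le_of_lt (mul_le_of_le_one_left (abs_nonneg _) φ.le_one) hηw
      intro h
      rw [show φ w * (η w - c) = -c by linarith, abs_neg] at this
      exact lt_irrefl _ this
  · filter_upwards [Metric.ball_mem_nhds w₀ (by positivity : 0 < δ / 4)] with w hw
    rw [φ.one_of_mem_closedBall (Metric.ball_subset_closedBall hw)]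
    ring

theorem exists_contDiff_deriv_ne_zero_eventuallyEq {f : ℝ → ℝ} {s : Set ℝ} {w₀ : ℝ}
    (hs : IsOpen s) (hw₀ : w₀ ∈ s) (hf : ContDiffOn ℝ ∞ f s) (hf₀ : deriv f w₀ ≠ 0) :
    ∃ ρ : ℝ → ℝ, ContDiff ℝ ∞ ρ ∧ (∀ w, deriv ρ w ≠ 0) ∧ ρ =ᶠ[𝓝 w₀] f := by
  obtain ⟨D, hD, hD0, hDf⟩ :=
    exists_contDiff_ne_zero_eventuallyEq hs hw₀ (hf.deriv_of_isOpen (m := ∞) hs (by simp)) hf₀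
  let ρ := fun w => f w₀ + ∫ t in w₀..w, D t
  have hρ : ∀ w, HasDerivAt ρ (D w) w := fun w =>
    ((hD.continuous.integral_hasStrictDerivAt w₀ w).hasDerivAt).const_add _
  have hρD : deriv ρ = D := funext fun w => (hρ w).deriv
  refine ⟨ρ, contDiff_infty_iff_deriv.2 ⟨fun w => (hρ w).differentiableAt, hρD ▸ hD⟩,
    hρD ▸ hD0, ?_⟩
  obtain ⟨r, hr, hrs⟩ := Metric.eventually_nhds_iff_ball.1 (hDf.and (hs.eventually_mem hw₀))
  have hρf : EqOn ρ f (Metric.ball w₀ r) :=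
    Metric.isOpen_ball.eqOn_of_deriv_eq (convex_ball w₀ r).isPreconnected
      (fun w _ => (hρ w).differentiableAt.differentiableWithinAt)
      (fun w hw => ((hf.contDiffAt (hs.mem_nhds (hrs w hw).2)).differentiableAt
        (by simp)).differentiableWithinAt)
      (fun w hw => by rw [hρD]; exact (hrs w hw).1) (Metric.mem_ball_self hr) (by simp [ρ])
  exact Filter.eventuallyEq_of_mem (Metric.ball_mem_nhds w₀ hr) hρf

theorem local_gauge_equivalence_general (n : ℕ) (Ω : Set ((Fin n → ℝ) × ℝ)) (hΩ : IsOpen Ω)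
    (h htil : ℝ → ℝ)
    (W Wtil : (Fin n → ℝ) × ℝ → ℝ)
    (hW : ContDiffOn ℝ (⊤ : ℕ∞) W Ω) (hWtil : ContDiffOn ℝ (⊤ : ℕ∞) Wtil Ω)
    (hWv : ∀ p ∈ Ω, fderiv ℝ W p (0, 1) ≠ 0)
    (hWtv : ∀ p ∈ Ω, fderiv ℝ Wtil p (0, 1) ≠ 0)
    (heq1 : ∀ p ∈ Ω, h (W p) / fderiv ℝ W p (0, 1)
        = htil (Wtil p) / fderiv ℝ Wtil p (0, 1))
    (heq2 : ∀ p ∈ Ω, ∀ i : Fin n,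
        fderiv ℝ W p (Pi.single i 1, 0) / fderiv ℝ W p (0, 1)
          = fderiv ℝ Wtil p (Pi.single i 1, 0) / fderiv ℝ Wtil p (0, 1))
    (q : (Fin n → ℝ) × ℝ) (hq : q ∈ Ω) :
    ∃ O ⊆ Ω, IsOpen O ∧ q ∈ O ∧
      ∃ ρ : ℝ → ℝ, ContDiff ℝ (⊤ : ℕ∞) ρ ∧ (∀ w, deriv ρ w ≠ 0) ∧
        (∀ p ∈ O, Wtil p = ρ (W p)) ∧
        ∀ w ∈ W '' O, htil (ρ w) = h w * deriv ρ w := by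
  have hWdiff : ∀ p ∈ Ω, DifferentiableAt ℝ W p := fun p hp =>
    (hW.contDiffAt (hΩ.mem_nhds hp)).differentiableAt (by simp)
  obtain ⟨ρ₀, t, ht, hqt, hρ₀, hWtilρ₀⟩ :=
    exists_eventuallyEq_comp_of_fderiv_eq_smul hΩ hW hWtil hWv (fun p hp =>
      ⟨_, ContinuousLinearMap.eq_smul_of_ratios_eq (hWv p hp) (hWtv p hp) (heq2 p hp)⟩) hq
  have hρ₀' : deriv ρ₀ (W q) ≠ 0 := by
    intro h0
    apply hWtv q hq
    rw [((hρ₀.contDiffAt (ht.mem_nhds hqt)).differentiableAt (by simp)).hasDerivAt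
      |>.fderiv_apply_of_eventuallyEq_comp (hWdiff q hq) hWtilρ₀, h0, zero_mul]
  obtain ⟨ρ, hρ, hρ', hρρ₀⟩ := exists_contDiff_deriv_ne_zero_eventuallyEq ht hqt hρ₀ hρ₀'
  have hWtilρ : ∀ᶠ p in 𝓝 q, Wtil p = ρ (W p) := by
    filter_upwards [hWtilρ₀, (hWdiff q hq).continuousAt.eventually hρρ₀] with p h₁ h₂
    rw [h₁, Function.comp_apply, h₂]
  obtain ⟨O, hOρ, hO, hqO⟩ := eventually_nhds_iff.1 hWtilρ
  refine ⟨O ∩ Ω, inter_subset_right, hO.inter hΩ, ⟨hqO, hq⟩, ρ, hρ, hρ', fun p hp => hOρ p hp.1,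
    ?_⟩
  rintro _ ⟨p, ⟨hpO, hpΩ⟩, rfl⟩
  have hWtilv : fderiv ℝ Wtil p (0, 1) = deriv ρ (W p) * fderiv ℝ W p (0, 1) :=
    ((hρ.differentiable (by simp)) (W p)).hasDerivAt.fderiv_apply_of_eventuallyEq_comp
      (hWdiff p hpΩ) (Filter.eventuallyEq_of_mem (hO.mem_nhds hpO) hOρ) _
  have hratio := heq1 p hpΩ
  rw [hWtilv, hOρ p hpO] at hratio
  field_simp [hWv p hpΩ, hρ' (W p)] at hratio
  linarith

/-- Theorem 3.1: If two pairs `(h, W)` and `(h̃, W̃)` on an open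
`Ω ⊆ ℝⁿ × ℝ⁺` give the same quantities `h(W)/W_v` and `∇ᵢW/W_v`, then locally they
are bound by a gauge transformation `W̃ = ρ∘W`, `h̃(ρ(w)) = h(w)·ρ'(w)`. -/
theorem local_gauge_equivalence (n : ℕ) (Ω : Set ((Fin n → ℝ) × ℝ)) (hΩ : IsOpen Ω)
    (hΩpos : ∀ p ∈ Ω, 0 < p.2)
    (h htil : ℝ → ℝ) (hh : ContDiff ℝ (⊤ : ℕ∞) h) (hhtil : ContDiff ℝ (⊤ : ℕ∞) htil)
    (W Wtil : (Fin n → ℝ) × ℝ → ℝ)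
    (hW : ContDiffOn ℝ (⊤ : ℕ∞) W Ω) (hWtil : ContDiffOn ℝ (⊤ : ℕ∞) Wtil Ω)
    (hWv : ∀ p ∈ Ω, fderiv ℝ W p (0, 1) ≠ 0)
    (hWtv : ∀ p ∈ Ω, fderiv ℝ Wtil p (0, 1) ≠ 0)
    (heq1 : ∀ p ∈ Ω, h (W p) / fderiv ℝ W p (0, 1)
        = htil (Wtil p) / fderiv ℝ Wtil p (0, 1))
    (heq2 : ∀ p ∈ Ω, ∀ i : Fin n,
        fderiv ℝ W p (Pi.single i 1, 0) / fderiv ℝ W p (0, 1)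
          = fderiv ℝ Wtil p (Pi.single i 1, 0) / fderiv ℝ Wtil p (0, 1))
    (q : (Fin n → ℝ) × ℝ) (hq : q ∈ Ω) :
    ∃ O ⊆ Ω, IsOpen O ∧ q ∈ O ∧
      ∃ ρ : ℝ → ℝ, ContDiff ℝ (⊤ : ℕ∞) ρ ∧ (∀ w, deriv ρ w ≠ 0) ∧
        (∀ p ∈ O, Wtil p = ρ (W p)) ∧
        ∀ w ∈ W '' O, htil (ρ w) = h w * deriv ρ w :=
  local_gauge_equivalence_general n Ω hΩ h htil W Wtil hW hWtil hWv hWtv heq1 heq2 q hq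
end

section
/- Let Ω ⊆ ℝⁿ × ℝ be open (coordinates x¹,…,xⁿ and v) and let W : Ω → ℝ be smooth with ∂W/∂v ≠ 0 at every point of Ω. Define bᵢ = −(∂W/∂xⁱ)/(∂W/∂v) for i = 1,…,n. Then for all i, j ∈ {1,…,n} and at every point of Ω: ∂bᵢ/∂xʲ + bⱼ·∂bᵢ/∂v = ∂bⱼ/∂xⁱ + bᵢ·∂bⱼ/∂v. -/
/-!
Write `bᵤ = -∂ᵤW / ∂ₑW`, so that `bᵢ` corresponds to `u = ∂/∂xⁱ` and `e = ∂/∂v`. The quotient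
rule gives `∂ₑW · ∂_w bᵤ = -D²W(w, u + bᵤ e)`, hence the left-hand side of the normality
equations is `-D²W(w + b_w e, u + bᵤ e) / ∂ₑW`: the Hessian of `W` evaluated on the two vectors
`u + bᵤ e`, `w + b_w e` tangent to the level set of `W`. It is symmetric in `u, w` because the
second derivative of a `C²` function is symmetric.
-/

variable {E : Type*} [NormedAddCommGroup E] [NormedSpace ℝ E]

theorem fderiv_div_apply {F G : E → ℝ} {p : E} (hF : DifferentiableAt ℝ F p)
    (hG : DifferentiableAt ℝ G p) (hGp : G p ≠ 0) (w : E) :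
    fderiv ℝ (fun q => F q / G q) p w
      = (fderiv ℝ F p w - F p / G p * fderiv ℝ G p w) / G p := by
  have h := (hF.hasFDerivAt.fun_mul ((hasFDerivAt_inv hGp).comp p hG.hasFDerivAt)).fderiv
  simp only [Function.comp_apply] at h
  simp only [div_eq_mul_inv, h, add_apply, smul_apply, ContinuousLinearMap.comp_apply,
    ContinuousLinearMap.toSpanSingleton_apply, smul_eq_mul]
  field_simp
  ring

theorem fderiv_fderiv_apply {W : E → ℝ} {p : E} (h : DifferentiableAt ℝ (fderiv ℝ W) p)
    (u w : E) : fderiv ℝ (fun q => fderiv ℝ W q u) p w = fderiv ℝ (fderiv ℝ W) p w u := by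
  simp [fderiv_clm_apply h (differentiableAt_const u)]

noncomputable def fderivQuot (W : E → ℝ) (e u : E) (q : E) : ℝ :=
  -fderiv ℝ W q u / fderiv ℝ W q e

section
variable {W : E → ℝ} {p e : E}

theorem fderiv_fderivQuot_apply (hW : ContDiffAt ℝ 2 W p) (he : fderiv ℝ W p e ≠ 0) (u w : E) :
    fderiv ℝ (fderivQuot W e u) p w
      = -fderiv ℝ (fderiv ℝ W) p w (u + fderivQuot W e u p • e) / fderiv ℝ W p e := by
  have hD : DifferentiableAt ℝ (fderiv ℝ W) p :=
    (hW.fderiv_right le_rfl).differentiableAt one_ne_zero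
  have hDu : DifferentiableAt ℝ (fun q => fderiv ℝ W q u) p :=
    hD.clm_apply (differentiableAt_const u)
  have hDe : DifferentiableAt ℝ (fun q => fderiv ℝ W q e) p :=
    hD.clm_apply (differentiableAt_const e)
  unfold fderivQuot
  rw [fderiv_div_apply (F := fun q => -fderiv ℝ W q u) hDu.neg hDe he, fderiv_fun_neg, neg_apply,
    fderiv_fderiv_apply hD, fderiv_fderiv_apply hD]
  simp only [map_add, map_smul, smul_eq_mul]
  ring

theorem fderivQuot_normality_eq_hessian (hW : ContDiffAt ℝ 2 W p) (he : fderiv ℝ W p e ≠ 0)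
    (u w : E) :
    fderiv ℝ (fderivQuot W e u) p w + fderivQuot W e w p * fderiv ℝ (fderivQuot W e u) p e
      = -fderiv ℝ (fderiv ℝ W) p (w + fderivQuot W e w p • e) (u + fderivQuot W e u p • e)
          / fderiv ℝ W p e := by
  rw [fderiv_fderivQuot_apply hW he, fderiv_fderivQuot_apply hW he]
  simp only [map_add, map_smul, add_apply, smul_apply, smul_eq_mul]
  ring

theorem fderivQuot_normality_symm (hW : ContDiffAt ℝ 2 W p) (he : fderiv ℝ W p e ≠ 0) (u w : E) :
    fderiv ℝ (fderivQuot W e u) p w + fderivQuot W e w p * fderiv ℝ (fderivQuot W e u) p e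
      = fderiv ℝ (fderivQuot W e w) p u + fderivQuot W e u p * fderiv ℝ (fderivQuot W e w) p e := by
  rw [fderivQuot_normality_eq_hessian hW he, fderivQuot_normality_eq_hessian hW he,
    hW.isSymmSndFDerivAt (by simp)]

end

/-- The quotients `bᵢ = −∇ᵢW/W_v` arising from a smooth `W` with
`W_v ≠ 0` always satisfy the normality equations
`∂bᵢ/∂xʲ + bⱼ·∂bᵢ/∂v = ∂bⱼ/∂xⁱ + bᵢ·∂bⱼ/∂v`. -/
theorem normality_equations_necessary (n : ℕ) (Ω : Set ((Fin n → ℝ) × ℝ)) (hΩ : IsOpen Ω)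
    (W : (Fin n → ℝ) × ℝ → ℝ) (hW : ContDiffOn ℝ (⊤ : ℕ∞) W Ω)
    (hWv : ∀ p ∈ Ω, fderiv ℝ W p (0, 1) ≠ 0)
    (b : Fin n → (Fin n → ℝ) × ℝ → ℝ)
    (hb : ∀ i p, b i p = -(fderiv ℝ W p (Pi.single i 1, 0)) / fderiv ℝ W p (0, 1))
    (i j : Fin n) (p : (Fin n → ℝ) × ℝ) (hp : p ∈ Ω) :
    fderiv ℝ (b i) p (Pi.single j 1, 0) + b j p * fderiv ℝ (b i) p (0, 1)
      = fderiv ℝ (b j) p (Pi.single i 1, 0) + b i p * fderiv ℝ (b j) p (0, 1) := by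
  obtain rfl : b = fun k => fderivQuot W (0, 1) (Pi.single k 1, 0) := funext₂ hb
  have hW2 : ContDiffAt ℝ 2 W p :=
    (hW.contDiffAt (hΩ.mem_nhds hp)).of_le (WithTop.coe_le_coe.mpr le_top)
  exact fderivQuot_normality_symm hW2 (hWv p hp) _ _
end

section
/- Let Ω ⊆ ℝⁿ × ℝ be open (coordinates x¹,…,xⁿ and v = xⁿ⁺¹), let b₁,…,bₙ : Ω → ℝ and φ : Ω → ℝ be smooth with φ(q) ≠ 0 for all q ∈ Ω. Define the components of a 1-form ω on Ω by ωᵢ = −bᵢ·φ for i = 1,…,n and ωₙ₊₁ = φ. If the closedness relations ∂ωᵢ/∂xʲ − ∂ωⱼ/∂xⁱ = 0 hold on Ω for all i, j ∈ {1,…,n+1}, then: (a) ∂φ/∂xⁱ = −(∂bᵢ/∂v)·φ − (∂φ/∂v)·bᵢ on Ω for each i ∈ {1,…,n}, and (b) ∂bᵢ/∂xʲ + bⱼ·∂bᵢ/∂v = ∂bⱼ/∂xⁱ + bᵢ·∂bⱼ/∂v on Ω for all i, j ∈ {1,…,n}. -/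
/-!
Expanding `dω = 0` with the product rule: the pair `(xⁱ, v)` says
`∂ᵢφ = ∂ᵥ(−bᵢφ)`, which is (4.6). Substituting (4.6) into the pair `(xⁱ, xʲ)` makes the terms
`bᵢbⱼ∂ᵥφ` cancel and leaves (4.7) multiplied by `φ`, which is nonzero.
-/

section

variable {𝕜 E : Type*} [NontriviallyNormedField 𝕜] [NormedAddCommGroup E] [NormedSpace 𝕜 E]
  {b c φ : E → 𝕜} {q : E}

theorem fderiv_neg_mul_apply (hb : DifferentiableAt 𝕜 b q) (hφ : DifferentiableAt 𝕜 φ q)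
    (e : E) :
    fderiv 𝕜 (fun x => -b x * φ x) q e = -(fderiv 𝕜 b q e * φ q) - b q * fderiv 𝕜 φ q e := by
  rw [fderiv_fun_mul hb.fun_neg hφ, fderiv_fun_neg]
  simp only [add_apply, smul_apply, neg_apply, smul_eq_mul]
  ring

theorem fderiv_apply_eq_of_fderiv_neg_mul_eq (hb : DifferentiableAt 𝕜 b q)
    (hφ : DifferentiableAt 𝕜 φ q) {e u : E}
    (h : fderiv 𝕜 (fun x => -b x * φ x) q u = fderiv 𝕜 φ q e) :
    fderiv 𝕜 φ q e = -fderiv 𝕜 b q u * φ q - fderiv 𝕜 φ q u * b q := by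
  rw [← h, fderiv_neg_mul_apply hb hφ]
  ring

theorem normality_of_fderiv_neg_mul_eq (hb : DifferentiableAt 𝕜 b q)
    (hc : DifferentiableAt 𝕜 c q) (hφ : DifferentiableAt 𝕜 φ q) (hφq : φ q ≠ 0) {e f u : E}
    (hbu : fderiv 𝕜 (fun x => -b x * φ x) q u = fderiv 𝕜 φ q e)
    (hcu : fderiv 𝕜 (fun x => -c x * φ x) q u = fderiv 𝕜 φ q f)
    (hbc : fderiv 𝕜 (fun x => -b x * φ x) q f = fderiv 𝕜 (fun x => -c x * φ x) q e) :
    fderiv 𝕜 b q f + c q * fderiv 𝕜 b q u = fderiv 𝕜 c q e + b q * fderiv 𝕜 c q u := by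
  have hφe := fderiv_apply_eq_of_fderiv_neg_mul_eq hb hφ hbu
  have hφf := fderiv_apply_eq_of_fderiv_neg_mul_eq hc hφ hcu
  rw [fderiv_neg_mul_apply hb hφ, fderiv_neg_mul_apply hc hφ, hφe, hφf] at hbc
  refine mul_right_cancel₀ hφq ?_
  linear_combination -hbc

end

/-- Closedness of the 1-form with components
`ωᵢ = −bᵢ·φ` (i = 1,…,n), `ωₙ₊₁ = φ` (with `φ ≠ 0`) forces (a) the equations (4.6)
for `φ` and (b) the normality equations (4.7) for the `bᵢ`. Coordinates on ℝⁿ⁺¹: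
`xⁱ` is coordinate `i.castSucc`, `v` is coordinate `Fin.last n`. -/
theorem closedness_forces_normality (n : ℕ) (Ω : Set (Fin (n + 1) → ℝ)) (hΩ : IsOpen Ω)
    (b : Fin n → (Fin (n + 1) → ℝ) → ℝ) (φ : (Fin (n + 1) → ℝ) → ℝ)
    (hb : ∀ i, ContDiffOn ℝ (⊤ : ℕ∞) (b i) Ω) (hφ : ContDiffOn ℝ (⊤ : ℕ∞) φ Ω)
    (hφ0 : ∀ q ∈ Ω, φ q ≠ 0)
    (ω : Fin (n + 1) → (Fin (n + 1) → ℝ) → ℝ)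
    (hω1 : ∀ i : Fin n, ω i.castSucc = fun q => -(b i q) * φ q)
    (hω2 : ω (Fin.last n) = φ)
    (hclosed : ∀ i j : Fin (n + 1), ∀ q ∈ Ω,
        fderiv ℝ (ω i) q (Pi.single j 1) - fderiv ℝ (ω j) q (Pi.single i 1) = 0) :
    (∀ i : Fin n, ∀ q ∈ Ω,
        fderiv ℝ φ q (Pi.single i.castSucc 1)
          = -(fderiv ℝ (b i) q (Pi.single (Fin.last n) 1)) * φ q
            - fderiv ℝ φ q (Pi.single (Fin.last n) 1) * b i q) ∧
    (∀ i j : Fin n, ∀ q ∈ Ω,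
        fderiv ℝ (b i) q (Pi.single j.castSucc 1)
            + b j q * fderiv ℝ (b i) q (Pi.single (Fin.last n) 1)
          = fderiv ℝ (b j) q (Pi.single i.castSucc 1)
            + b i q * fderiv ℝ (b j) q (Pi.single (Fin.last n) 1)) := by
  have hbd : ∀ i, ∀ q ∈ Ω, DifferentiableAt ℝ (b i) q := fun i q hq =>
    ((hb i).contDiffAt (hΩ.mem_nhds hq)).differentiableAt (by simp)
  have hφd : ∀ q ∈ Ω, DifferentiableAt ℝ φ q := fun q hq =>
    (hφ.contDiffAt (hΩ.mem_nhds hq)).differentiableAt (by simp)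
  have hvert : ∀ i : Fin n, ∀ q ∈ Ω, fderiv ℝ (fun x => -b i x * φ x) q
      (Pi.single (Fin.last n) 1) = fderiv ℝ φ q (Pi.single i.castSucc 1) := fun i q hq => by
    rw [← sub_eq_zero, ← hω1, ← hω2]
    exact hclosed i.castSucc (Fin.last n) q hq
  have hhor : ∀ i j : Fin n, ∀ q ∈ Ω,
      fderiv ℝ (fun x => -b i x * φ x) q (Pi.single j.castSucc 1) =
        fderiv ℝ (fun x => -b j x * φ x) q (Pi.single i.castSucc 1) := fun i j q hq => by
    rw [← sub_eq_zero, ← hω1, ← hω1]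
    exact hclosed i.castSucc j.castSucc q hq
  refine ⟨fun i q hq => fderiv_apply_eq_of_fderiv_neg_mul_eq (hbd i q hq) (hφd q hq)
    (hvert i q hq), fun i j q hq => ?_⟩
  exact normality_of_fderiv_neg_mul_eq (hbd i q hq) (hbd j q hq) (hφd q hq) (hφ0 q hq)
    (hvert i q hq) (hvert j q hq) (hhor i j q hq)
end

section
/- Let Ω ⊆ ℝⁿ × ℝ be open (coordinates x¹,…,xⁿ and v), let W : Ω → ℝ be smooth with ∂W/∂v ≠ 0 at every point of Ω, and let h : ℝ → ℝ be smooth. Define a = h(W)/(∂W/∂v) and bᵢ = −(∂W/∂xⁱ)/(∂W/∂v) for i = 1,…,n. Then for each i ∈ {1,…,n} and at every point of Ω: ∂a/∂xⁱ + bᵢ·∂a/∂v = (∂bᵢ/∂v)·a. -/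
/-!
At `p`, `Lᵢ` is the derivative in the direction `∂/∂xⁱ + bᵢ(p) ∂/∂v`, along which `W` is
stationary. So `Lᵢ` annihilates the numerator `h(W)` of `a`, and `Lᵢ a = -h(W) · Lᵢ(W_v) / W_v²`.
By symmetry of the second derivative, `Lᵢ(W_v) = W_vxⁱ + bᵢ W_vv = -W_v · ∂bᵢ/∂v`, which turns
this into `(∂bᵢ/∂v) · a`.
-/

open ContinuousLinearMap

section

variable {E : Type*} [NormedAddCommGroup E] [NormedSpace ℝ E] {p : E}

theorem fderiv_div_apply_s12 {f g : E → ℝ} (hf : DifferentiableAt ℝ f p) (hg : DifferentiableAt ℝ g p)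
    (hgp : g p ≠ 0) (u : E) :
    fderiv ℝ (fun q => f q / g q) p u
      = (fderiv ℝ f p u * g p - f p * fderiv ℝ g p u) / g p ^ 2 := by
  have hinv : HasFDerivAt (fun q => (g q)⁻¹) ((-(g p ^ 2)⁻¹) • fderiv ℝ g p) p :=
    (hasDerivAt_inv hgp).comp_hasFDerivAt p hg.hasFDerivAt
  simp only [div_eq_mul_inv]
  rw [(hf.hasFDerivAt.fun_mul hinv).fderiv]
  simp only [add_apply, smul_apply, smul_eq_mul]
  field_simp
  ring

/-- The coefficient `b` for which `e + b • w` is tangent to the level set of `W`. -/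
noncomputable def levelSlope (W : E → ℝ) (e w : E) (q : E) : ℝ :=
  -fderiv ℝ W q e / fderiv ℝ W q w

variable {W : E → ℝ} {e w : E}

theorem fderiv_fderiv_apply_apply (hW : DifferentiableAt ℝ (fderiv ℝ W) p) (u v : E) :
    fderiv ℝ (fun q => fderiv ℝ W q v) p u = fderiv ℝ (fderiv ℝ W) p u v :=
  congrArg (· u) ((apply ℝ ℝ v).hasFDerivAt.comp p hW.hasFDerivAt).fderiv

theorem differentiableAt_fderiv_apply (hW : DifferentiableAt ℝ (fderiv ℝ W) p) (v : E) :
    DifferentiableAt ℝ (fun q => fderiv ℝ W q v) p :=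
  (apply ℝ ℝ v).differentiableAt.comp p hW

theorem fderiv_apply_add_levelSlope_smul (hw : fderiv ℝ W p w ≠ 0) :
    fderiv ℝ W p (e + levelSlope W e w p • w) = 0 := by
  rw [map_add, map_smul, levelSlope, smul_eq_mul]
  field_simp
  ring

theorem fderiv_levelSlope_apply (hW : ContDiffAt ℝ 2 W p) (hw : fderiv ℝ W p w ≠ 0) :
    fderiv ℝ (levelSlope W e w) p w
      = -fderiv ℝ (fun q => fderiv ℝ W q w) p (e + levelSlope W e w p • w) / fderiv ℝ W p w := by
  have hW' : DifferentiableAt ℝ (fderiv ℝ W) p :=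
    (hW.fderiv_right (m := 1) le_rfl).differentiableAt one_ne_zero
  have hsymm : IsSymmSndFDerivAt ℝ W p := hW.isSymmSndFDerivAt (by simp)
  have hnum : DifferentiableAt ℝ (fun q => -fderiv ℝ W q e) p :=
    (differentiableAt_fderiv_apply hW' e).neg
  rw [show levelSlope W e w = fun q => -fderiv ℝ W q e / fderiv ℝ W q w from rfl,
    fderiv_div_apply_s12 hnum (differentiableAt_fderiv_apply hW' w) hw, fderiv_fun_neg]
  simp only [neg_apply, map_add, map_smul, fderiv_fderiv_apply_apply hW', add_apply, smul_apply,
    smul_eq_mul, hsymm.eq e w]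
  field_simp
  ring

theorem fderiv_comp_div_fderiv_apply_add_levelSlope_smul {h : ℝ → ℝ} (hW : ContDiffAt ℝ 2 W p)
    (hw : fderiv ℝ W p w ≠ 0) (hh : DifferentiableAt ℝ h (W p)) :
    fderiv ℝ (fun q => h (W q) / fderiv ℝ W q w) p (e + levelSlope W e w p • w)
      = fderiv ℝ (levelSlope W e w) p w * (h (W p) / fderiv ℝ W p w) := by
  have hW1 : DifferentiableAt ℝ W p := hW.differentiableAt two_ne_zero
  have hW' : DifferentiableAt ℝ (fderiv ℝ W) p :=
    (hW.fderiv_right (m := 1) le_rfl).differentiableAt one_ne_zero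
  have hhW : HasFDerivAt (fun q => h (W q)) (deriv h (W p) • fderiv ℝ W p) p :=
    hh.hasDerivAt.comp_hasFDerivAt p hW1.hasFDerivAt
  rw [fderiv_div_apply_s12 hhW.differentiableAt (differentiableAt_fderiv_apply hW' w) hw,
    hhW.fderiv, smul_apply, fderiv_apply_add_levelSlope_smul hw, fderiv_levelSlope_apply hW hw]
  field_simp
  ring

end

/-- The gauge-invariant quantity `a = h(W)/W_v` satisfies equation
(6.2): `∂a/∂xⁱ + bᵢ·∂a/∂v = (∂bᵢ/∂v)·a`, with `bᵢ = −∇ᵢW/W_v`. -/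
theorem a_satisfies_eq_62 (n : ℕ) (Ω : Set ((Fin n → ℝ) × ℝ)) (hΩ : IsOpen Ω)
    (W : (Fin n → ℝ) × ℝ → ℝ) (hW : ContDiffOn ℝ (⊤ : ℕ∞) W Ω)
    (hWv : ∀ p ∈ Ω, fderiv ℝ W p (0, 1) ≠ 0)
    (h : ℝ → ℝ) (hh : ContDiff ℝ (⊤ : ℕ∞) h)
    (a : (Fin n → ℝ) × ℝ → ℝ) (b : Fin n → (Fin n → ℝ) × ℝ → ℝ)
    (ha : ∀ p, a p = h (W p) / fderiv ℝ W p (0, 1))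
    (hb : ∀ i p, b i p = -(fderiv ℝ W p (Pi.single i 1, 0)) / fderiv ℝ W p (0, 1))
    (i : Fin n) (p : (Fin n → ℝ) × ℝ) (hp : p ∈ Ω) :
    fderiv ℝ a p (Pi.single i 1, 0) + b i p * fderiv ℝ a p (0, 1)
      = fderiv ℝ (b i) p (0, 1) * a p := by
  have hW2 : ContDiffAt ℝ 2 W p :=
    (hW.contDiffAt (hΩ.mem_nhds hp)).of_le (WithTop.coe_le_coe.mpr le_top)
  have ha' : a = fun q => h (W q) / fderiv ℝ W q (0, 1) := funext ha
  have hb' : b i = levelSlope W (Pi.single i 1, 0) (0, 1) := funext (hb i)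
  rw [hb', ← smul_eq_mul, ← map_smul, ← map_add, ha']
  exact fderiv_comp_div_fderiv_apply_add_levelSlope_smul hW2 (hWv p hp)
    (hh.differentiable (by simp) (W p))
end

section
/- Let Ω ⊆ ℝⁿ × ℝ be open (coordinates x¹,…,xⁿ and v), and let b₁,…,bₙ, a : Ω → ℝ be smooth with a(q) ≠ 0 for all q ∈ Ω, satisfying ∂a/∂xⁱ + bᵢ·∂a/∂v = (∂bᵢ/∂v)·a on Ω for all i ∈ {1,…,n}. Then the function φ = 1/a satisfies ∂φ/∂xⁱ = −(∂bᵢ/∂v)·φ − (∂φ/∂v)·bᵢ on Ω for all i ∈ {1,…,n}. -/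
/-! Since `D(1/a) = -Da / a²`, equation (4.6) for `1/a` is equation (6.2) multiplied by `-1/a²`. -/

variable {𝕜 E : Type*} [NontriviallyNormedField 𝕜] [NormedAddCommGroup E] [NormedSpace 𝕜 E]

theorem fderiv_fun_inv_apply {f : E → 𝕜} {x : E} (hf : DifferentiableAt 𝕜 f x) (hx : f x ≠ 0)
    (v : E) : fderiv 𝕜 (fun y => (f y)⁻¹) x v = -fderiv 𝕜 f x v / f x ^ 2 := by
  have h : HasFDerivAt (fun y => (f y)⁻¹) _ x := (hasFDerivAt_inv hx).comp x hf.hasFDerivAt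
  simp [h.fderiv, div_eq_mul_inv, mul_comm]

theorem fderiv_fun_inv_apply_of_transport {f : E → 𝕜} {x : E} (hf : DifferentiableAt 𝕜 f x)
    (hx : f x ≠ 0) {u w : E} {β c : 𝕜} (h : fderiv 𝕜 f x u + β * fderiv 𝕜 f x w = c * f x) :
    fderiv 𝕜 (fun y => (f y)⁻¹) x u
      = -c * (f x)⁻¹ - fderiv 𝕜 (fun y => (f y)⁻¹) x w * β := by
  rw [fderiv_fun_inv_apply hf hx, fderiv_fun_inv_apply hf hx, eq_sub_of_add_eq h]
  field_simp
  ring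

theorem inverse_of_a_is_integrating_factor_general (n : ℕ) (Ω : Set ((Fin n → ℝ) × ℝ))
    (hΩ : IsOpen Ω)
    (b : Fin n → (Fin n → ℝ) × ℝ → ℝ) (a : (Fin n → ℝ) × ℝ → ℝ)
    (ha : ContDiffOn ℝ (⊤ : ℕ∞) a Ω)
    (ha0 : ∀ q ∈ Ω, a q ≠ 0)
    (heq : ∀ i : Fin n, ∀ p ∈ Ω,
        fderiv ℝ a p (Pi.single i 1, 0) + b i p * fderiv ℝ a p (0, 1)
          = fderiv ℝ (b i) p (0, 1) * a p)
    (φ : (Fin n → ℝ) × ℝ → ℝ) (hφ : ∀ p, φ p = 1 / a p)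
    (i : Fin n) (p : (Fin n → ℝ) × ℝ) (hp : p ∈ Ω) :
    fderiv ℝ φ p (Pi.single i 1, 0)
      = -(fderiv ℝ (b i) p (0, 1)) * φ p - fderiv ℝ φ p (0, 1) * b i p := by
  obtain rfl : φ = fun q => (a q)⁻¹ := funext fun q => (hφ q).trans (one_div _)
  have ha_diff : DifferentiableAt ℝ a p :=
    (ha.contDiffAt (hΩ.mem_nhds hp)).differentiableAt (by simp)
  exact fderiv_fun_inv_apply_of_transport ha_diff (ha0 p hp) (heq i p hp)

/-- If `a` is nowhere zero and satisfies equations (6.2)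
`∂a/∂xⁱ + bᵢ·∂a/∂v = (∂bᵢ/∂v)·a` on `Ω`, then `φ = 1/a` satisfies equations (4.6)
`∂φ/∂xⁱ = −(∂bᵢ/∂v)·φ − (∂φ/∂v)·bᵢ` on `Ω`. -/
theorem inverse_of_a_is_integrating_factor (n : ℕ) (Ω : Set ((Fin n → ℝ) × ℝ))
    (hΩ : IsOpen Ω)
    (b : Fin n → (Fin n → ℝ) × ℝ → ℝ) (a : (Fin n → ℝ) × ℝ → ℝ)
    (hb : ∀ i, ContDiffOn ℝ (⊤ : ℕ∞) (b i) Ω) (ha : ContDiffOn ℝ (⊤ : ℕ∞) a Ω)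
    (ha0 : ∀ q ∈ Ω, a q ≠ 0)
    (heq : ∀ i : Fin n, ∀ p ∈ Ω,
        fderiv ℝ a p (Pi.single i 1, 0) + b i p * fderiv ℝ a p (0, 1)
          = fderiv ℝ (b i) p (0, 1) * a p)
    (φ : (Fin n → ℝ) × ℝ → ℝ) (hφ : ∀ p, φ p = 1 / a p)
    (i : Fin n) (p : (Fin n → ℝ) × ℝ) (hp : p ∈ Ω) :
    fderiv ℝ φ p (Pi.single i 1, 0)
      = -(fderiv ℝ (b i) p (0, 1)) * φ p - fderiv ℝ φ p (0, 1) * b i p :=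
  inverse_of_a_is_integrating_factor_general n Ω hΩ b a ha ha0 heq φ hφ i p hp
end
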